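/- Let (p,q) be a non-strict pair in X. Then bisec(p,q) ∩ {z ∈ X : φ(z − p) ≥ φ(s_t − p)} = C(p,φ) ∩ C(q,φ). -/

import Mathlib

variable {X : Type*} [NormedAddCommGroup X] [NormedSpace ℝ X]

/-- The bisector of two points: all points equidistant from `p` and `q`. -/
def bisec (p q : X) : Set X := {z : X | ‖z - p‖ = ‖z - q‖}

/-- The pair `(p, q)` is strict if the unit sphere contains no nondegenerate
segment parallel to `p - q`. -/
def strictPair (p q : X) : Prop :=
  ¬ ∃ a b : X, a ≠ b ∧ segment ℝ a b ⊆ {x : X | ‖x‖ = 1} ∧ ∃ t : ℝ, b - a = t • (p - q)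

/-- The cone `C(x, φ) = {x + a : φ(a) = ‖a‖}`. -/
def cone (x : X) (φ : X →L[ℝ] ℝ) : Set X := {z : X | φ (z - x) = ‖z - x‖}

/-! Since `φ (p - q) = 0` and `q - p = t • (u' - u)` with `t > 0`, the vectors `z - p` and
`z - q` lie on the same line `φ = m`, where `m = φ (z - p)`, at parameter distance `t`. In
dimension two this line is `s ↦ m • u + s • (u' - u)`, along which the norm is convex and is at
most `m` on the face `m • [u, u']` (parameters `[0, m]`). On the bisector the two points have
equal norm, and when `t ≤ m` convexity forces this norm down to `m`, i.e. `z` lies in both cones.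
Conversely, points of the cones are nonnegative combinations of `u` and `u'`; comparing the
`u'`-coefficients of `z - p` and `z - q = (z - p) - t • (u' - u)` gives `φ (z - p) ≥ t`. -/

open Set Module

theorem ConvexOn.apply_le_of_apply_sub_eq {f : ℝ → ℝ} (hf : ConvexOn ℝ univ f) {m s t : ℝ}
    (h0 : f 0 ≤ m) (hm : f m ≤ m) (ht : 0 < t) (htm : t ≤ m) (hst : f (s - t) = f s) :
    f s ≤ m := by
  -- `s - t < s` cannot straddle `[0, m]` since `t ≤ m`: either one of them lies in `[0, m]`,
  -- or both lie on one side and the inner one is bounded by the value at `0` or at `m`.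
  have hIcc : ∀ x ∈ Icc 0 m, f x ≤ m := fun x hx =>
    (hf.le_on_segment trivial trivial (by rwa [segment_eq_Icc (ht.le.trans htm)])).trans
      (max_le h0 hm)
  rcases le_or_gt s m with hsm | hms
  · rcases le_or_gt 0 s with hs0 | hs0
    · exact hIcc s ⟨hs0, hsm⟩
    · exact (hf.le_right_of_left_le'' trivial trivial (by linarith) hs0.le hst.le).trans h0
  · rcases le_or_gt (s - t) m with hstm | hmst
    · exact hst ▸ hIcc (s - t) ⟨by linarith, hstm⟩
    · exact hst ▸ (hf.le_left_of_right_le'' trivial trivial hmst.le (by linarith) hst.ge).trans hm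

theorem convexOn_norm_add_smul (a v : X) : ConvexOn ℝ univ fun x : ℝ => ‖a + x • v‖ := by
  have := (convexOn_norm convex_univ).comp_affineMap (AffineMap.lineMap a (a + v) : ℝ →ᵃ[ℝ] X)
  simpa [Function.comp_def, AffineMap.lineMap_apply, add_comm] using this

theorem norm_smul_add_smul_sub_le {u u' : X} (hu : ‖u‖ ≤ 1) (hu' : ‖u'‖ ≤ 1) {m s t : ℝ}
    (ht : 0 < t) (htm : t ≤ m) (h : ‖m • u + (s - t) • (u' - u)‖ = ‖m • u + s • (u' - u)‖) :
    ‖m • u + s • (u' - u)‖ ≤ m := by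
  have hm : 0 ≤ m := ht.le.trans htm
  refine (convexOn_norm_add_smul (m • u) (u' - u)).apply_le_of_apply_sub_eq ?_ ?_ ht htm h
  · rw [zero_smul, add_zero, norm_smul, Real.norm_of_nonneg hm]
    exact mul_le_of_le_one_right hm hu
  · rw [← smul_add, add_sub_cancel, norm_smul, Real.norm_of_nonneg hm]
    exact mul_le_of_le_one_right hm hu'

theorem linearIndependent_pair_of_apply_eq_one {K V : Type*} [Field K] [AddCommGroup V]
    [Module K V] (φ : V →ₗ[K] K) {u u' : V} (hu : φ u = 1) (hu' : φ u' = 1) (huu' : u ≠ u') :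
    LinearIndependent K ![u, u'] := by
  refine LinearIndependent.pair_iff.2 fun a b hab => ?_
  have hba : b = -a := by
    simpa [hu, hu', eq_neg_iff_add_eq_zero, add_comm] using congrArg φ hab
  subst hba
  have : a • (u - u') = 0 := by rwa [smul_sub, sub_eq_add_neg, ← neg_smul]
  simpa using (smul_eq_zero.1 this).resolve_right (sub_ne_zero.2 huu')

theorem exists_eq_smul_add_smul_of_finrank_eq_two {K V : Type*} [Field K] [AddCommGroup V]
    [Module K V] (hdim : finrank K V = 2) {u u' : V} (h : LinearIndependent K ![u, u'])
    (x : V) : ∃ a b : K, x = a • u + b • u' := by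
  have hspan := h.span_eq_top_of_card_eq_finrank (by simp [hdim])
  rw [Matrix.range_cons_cons_empty] at hspan
  obtain ⟨a, b, hab⟩ := Submodule.mem_span_pair.1 (hspan ▸ Submodule.mem_top (x := x))
  exact ⟨a, b, hab.symm⟩

theorem exists_nonneg_smul_add_smul_of_apply_eq_norm {φ : X →L[ℝ] ℝ} {u u' : X}
    (hface : {x : X | ‖x‖ ≤ 1 ∧ φ x = 1} = segment ℝ u u') {w : X} (hw : φ w = ‖w‖) :
    ∃ a b : ℝ, 0 ≤ a ∧ 0 ≤ b ∧ w = a • u + b • u' := by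
  rcases eq_or_ne w 0 with rfl | hw0
  · exact ⟨0, 0, le_rfl, le_rfl, by simp⟩
  have hn : 0 < ‖w‖ := norm_pos_iff.2 hw0
  have hmem : ‖w‖⁻¹ • w ∈ segment ℝ u u' := by
    rw [← hface]
    refine ⟨?_, ?_⟩
    · rw [norm_smul, Real.norm_of_nonneg (inv_nonneg.2 hn.le), inv_mul_cancel₀ hn.ne']
    · rw [map_smul, smul_eq_mul, hw, inv_mul_cancel₀ hn.ne']
  obtain ⟨a, b, ha, hb, -, hab⟩ := hmem
  refine ⟨‖w‖ * a, ‖w‖ * b, by positivity, by positivity, ?_⟩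
  rw [mul_smul, mul_smul, ← smul_add, hab, smul_inv_smul₀ hn.ne']

section

variable {φ : X →L[ℝ] ℝ} {p q u u' z : X} {t : ℝ}

theorem apply_sub_eq_apply_sub_of_apply_sub_eq_zero (hφpq : φ (p - q) = 0) (z : X) :
    φ (z - q) = φ (z - p) := by
  rw [← sub_add_sub_cancel z p q, map_add, hφpq, add_zero]

theorem mem_cone_inter_of_mem_bisec (hdim : finrank ℝ X = 2) (hφ : ‖φ‖ ≤ 1)
    (hφpq : φ (p - q) = 0) (hu : ‖u‖ ≤ 1) (hu' : ‖u'‖ ≤ 1) (hφu : φ u = 1) (hφu' : φ u' = 1)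
    (hind : LinearIndependent ℝ ![u, u']) (hqp : q - p = t • (u' - u)) (ht : 0 < t)
    (hz : z ∈ bisec p q) (htz : t ≤ φ (z - p)) : z ∈ cone p φ ∩ cone q φ := by
  have hφzq := apply_sub_eq_apply_sub_of_apply_sub_eq_zero hφpq z
  obtain ⟨a, b, hab⟩ := exists_eq_smul_add_smul_of_finrank_eq_two hdim hind (z - p)
  have hm : φ (z - p) = a + b := by simp [hab, hφu, hφu']
  have hzp : z - p = φ (z - p) • u + b • (u' - u) := by rw [hm, hab]; module
  have hzq : z - q = φ (z - p) • u + (b - t) • (u' - u) := by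
    rw [← sub_sub_sub_cancel_right z q p, hqp]
    nth_rw 1 [hzp]
    module
  have hle : ‖z - p‖ ≤ φ (z - p) := by
    have h := norm_smul_add_smul_sub_le hu hu' ht htz (by rw [← hzp, ← hzq]; exact hz.symm)
    rwa [← hzp] at h
  have hge : φ (z - p) ≤ ‖z - p‖ :=
    (le_abs_self _).trans (by simpa using φ.le_of_opNorm_le hφ (z - p))
  have heq : φ (z - p) = ‖z - p‖ := le_antisymm hge hle
  exact ⟨heq, hφzq.trans (heq.trans hz)⟩

theorem mem_bisec_of_mem_cone_inter (hφpq : φ (p - q) = 0)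
    (hface : {x : X | ‖x‖ ≤ 1 ∧ φ x = 1} = segment ℝ u u') (hφu : φ u = 1) (hφu' : φ u' = 1)
    (hind : LinearIndependent ℝ ![u, u']) (hqp : q - p = t • (u' - u))
    (hz : z ∈ cone p φ ∩ cone q φ) : z ∈ bisec p q ∧ t ≤ φ (z - p) := by
  obtain ⟨hzp, hzq⟩ := hz
  have hφzq := apply_sub_eq_apply_sub_of_apply_sub_eq_zero hφpq z
  refine ⟨(hzp.symm.trans hφzq.symm).trans hzq, ?_⟩
  obtain ⟨a, b, ha, hb, hab⟩ := exists_nonneg_smul_add_smul_of_apply_eq_norm hface hzp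
  obtain ⟨a', b', -, hb', hab'⟩ := exists_nonneg_smul_add_smul_of_apply_eq_norm hface hzq
  have hcomb : (a - a' + t) • u + (b - b' - t) • u' = 0 := by
    have h := sub_sub_sub_cancel_left p q z
    rw [hab, hab', hqp] at h
    linear_combination (norm := module) h
  have hbb' : b - b' - t = 0 := (LinearIndependent.pair_iff.1 hind _ _ hcomb).2
  have hm : φ (z - p) = a + b := by simp [hab, hφu, hφu']
  linarith

end

theorem bisector_upper_part_eq_cone_inter_general
    (hdim : Module.finrank ℝ X = 2) (p q : X) (hpq : p ≠ q)
    (φ : X →L[ℝ] ℝ) (hφ : ‖φ‖ = 1) (hφpq : φ (p - q) = 0)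
    (u u' : X)
    (hface : {x : X | ‖x‖ ≤ 1 ∧ φ x = 1} = segment ℝ u u')
    (s_t : X)
    (hst1 : ∃ t : ℝ, 0 ≤ t ∧ s_t = p + t • u')
    (hst2 : ∃ t : ℝ, 0 ≤ t ∧ s_t = q + t • u) :
    bisec p q ∩ {z : X | φ (s_t - p) ≤ φ (z - p)} = cone p φ ∩ cone q φ := by
  obtain ⟨hu, hφu⟩ : u ∈ {x : X | ‖x‖ ≤ 1 ∧ φ x = 1} := hface ▸ left_mem_segment ℝ u u'
  obtain ⟨hu', hφu'⟩ : u' ∈ {x : X | ‖x‖ ≤ 1 ∧ φ x = 1} := hface ▸ right_mem_segment ℝ u u'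
  obtain ⟨t, ht0, rfl⟩ := hst1
  obtain ⟨t', -, hst⟩ := hst2
  have htt' : t' = t := by
    have h := congrArg φ hst
    simp only [map_add, map_smul, smul_eq_mul, hφu, hφu', mul_one] at h
    rw [map_sub] at hφpq
    linarith
  rw [htt'] at hst
  have hqp : q - p = t • (u' - u) := by linear_combination (norm := module) -hst
  have ht : 0 < t := ht0.lt_of_ne' fun h => hpq (by simpa [h, sub_eq_zero, eq_comm] using hqp)
  have hind := linearIndependent_pair_of_apply_eq_one (φ : X →ₗ[ℝ] ℝ) hφu hφu' fun h => by
    simp [h, sub_eq_zero, eq_comm, hpq] at hqp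
  have hφst : φ (p + t • u' - p) = t := by simp [hφu']
  ext z
  rw [mem_inter_iff, mem_ofPred_eq, hφst]
  exact ⟨fun ⟨hz, htz⟩ => mem_cone_inter_of_mem_bisec hdim hφ.le hφpq hu hu' hφu hφu' hind hqp ht
    hz htz, mem_bisec_of_mem_cone_inter hφpq hface hφu hφu' hind hqp⟩

theorem bisector_upper_part_eq_cone_inter
    (hdim : Module.finrank ℝ X = 2) (p q : X) (hpq : p ≠ q)
    (hns : ¬ strictPair p q)
    (φ : X →L[ℝ] ℝ) (hφ : ‖φ‖ = 1) (hφpq : φ (p - q) = 0)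
    (u u' : X) (huu' : u ≠ u')
    (hface : {x : X | ‖x‖ ≤ 1 ∧ φ x = 1} = segment ℝ u u')
    (hlabel : ∃ c : ℝ, 0 < c ∧ u' - u = c • (q - p))
    (s_t : X)
    (hst1 : ∃ t : ℝ, 0 ≤ t ∧ s_t = p + t • u')
    (hst2 : ∃ t : ℝ, 0 ≤ t ∧ s_t = q + t • u) :
    bisec p q ∩ {z : X | φ (s_t - p) ≤ φ (z - p)} = cone p φ ∩ cone q φ :=
  bisector_upper_part_eq_cone_inter_general hdim p q hpq φ hφ hφpq u u' hface s_t hst1 hst2
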